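/- For μ > 1/2 and all k ≥ 2, at least one of the following holds: E[I_{k-1}] < E[I_k] or E[I_{k+1}] < E[I_k], where E[I_j] = (L_j + (j-1)L_0 + j R_j)/(2j) with L_j = 1-(1-μ)(1-μp)^j and R_j = μ+p-μp-(1-μ)^2 p(1-μp)^{j-1}. -/
import Mathlib


noncomputable def Lprob (μ p : ℝ) (j : ℕ) : ℝ := 1 - (1 - μ) * (1 - μ * p) ^ j

noncomputable def Rprob (μ p : ℝ) (j : ℕ) : ℝ :=
  μ + p - μ * p - (1 - μ) ^ 2 * p * (1 - μ * p) ^ (j - 1)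

/-- Expected infected fraction of a `j`-star plus `j-1` isolated vertices. -/
noncomputable def EI (μ p : ℝ) (j : ℕ) : ℝ :=
  (Lprob μ p j + ((j : ℝ) - 1) * Lprob μ p 0 + (j : ℝ) * Rprob μ p j) / (2 * j)

set_option maxHeartbeats 1000000 in
lemma key_pos (q : ℝ) (hq0 : 0 < q) (hq1 : q < 1) (m : ℕ) :
    0 < ((m:ℝ)+1) - ((m:ℝ)+3)*q + ((m:ℝ)+3)*q^(m+2) - ((m:ℝ)+1)*q^(m+3) := by
  set S := ∑ j ∈ Finset.range (m+1), q^(j+1) with hSdef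
  have hS : ∀ j ∈ Finset.range (m+1),
      (1 - q^(j+1))*(1 - q^(m+1-j)) = 1 + q^(m+2) - q^(j+1) - q^((m-j)+1) := by
    intro j hj
    simp only [Finset.mem_range] at hj
    have h1 : m + 1 - j = (m - j) + 1 := by omega
    have h2 : (j+1) + ((m-j)+1) = m + 2 := by omega
    rw [h1]
    have : q^(j+1) * q^((m-j)+1) = q^(m+2) := by rw [← pow_add, h2]
    nlinarith [this]
  have hrefl : ∑ j ∈ Finset.range (m+1), q^((m-j)+1) = S := by
    have := Finset.sum_range_reflect (fun j => q^(j+1)) (m+1)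
    simpa using this
  have hsum : ∑ j ∈ Finset.range (m+1), (1 - q^(j+1))*(1 - q^(m+1-j))
      = ((m:ℝ)+1) * (1 + q^(m+2)) - 2 * S := by
    rw [Finset.sum_congr rfl hS]
    simp [Finset.sum_add_distrib, Finset.sum_sub_distrib, hrefl]
    ring
  have hgeom : (1 - q) * S = q - q^(m+2) := by
    have h := geom_sum_mul q (m+1)
    have hq : S = q * ∑ j ∈ Finset.range (m+1), q^j := by
      rw [Finset.mul_sum]; exact Finset.sum_congr rfl fun j _ => by ring
    rw [hq]
    linear_combination (-q) * h
  have hpos : 0 < ∑ j ∈ Finset.range (m+1), (1 - q^(j+1))*(1 - q^(m+1-j)) := by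
    apply Finset.sum_pos
    · intro j hj
      simp only [Finset.mem_range] at hj
      have h1 : q^(j+1) < 1 := pow_lt_one₀ hq0.le hq1 (by omega)
      have h2 : q^(m+1-j) < 1 := pow_lt_one₀ hq0.le hq1 (by omega)
      nlinarith
    · exact ⟨0, Finset.mem_range.mpr (by omega)⟩
  have hq' : 0 < 1 - q := by linarith
  have hmain := mul_pos hq' hpos
  rw [hsum] at hmain
  have expand : (1-q)*(((m:ℝ)+1)*(1+q^(m+2)) - 2*S)
      = (1-q)*(((m:ℝ)+1)*(1+q^(m+2))) - 2*((1-q)*S) := by ring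
  rw [expand, hgeom] at hmain
  have goal_eq : ((m:ℝ)+1) - ((m:ℝ)+3)*q + ((m:ℝ)+3)*q^(m+2) - ((m:ℝ)+1)*q^(m+3)
      = (1-q)*(((m:ℝ)+1)*(1+q^(m+2))) - 2*(q - q^(m+2)) := by ring
  rw [goal_eq]
  exact hmain

set_option maxHeartbeats 1000000 in
/-- For `μ > 1/2`, no intermediate star size is optimal: for every `k ≥ 2`,
either the `(k-1)`-star or the `(k+1)`-star configuration is strictly better. -/
theorem no_intermediate_star_optimal (μ p : ℝ) (hμ : μ ∈ Set.Ioo (0 : ℝ) 1)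
    (hp : p ∈ Set.Ioo (0 : ℝ) 1) (hμhalf : 1 / 2 < μ) (k : ℕ) (hk : 2 ≤ k) :
    EI μ p (k - 1) < EI μ p k ∨ EI μ p (k + 1) < EI μ p k := by
  obtain ⟨hμ0, hμ1⟩ := hμ
  obtain ⟨hp0, hp1⟩ := hp
  obtain ⟨m, rfl⟩ : ∃ m, k = m + 2 := ⟨k - 2, by omega⟩
  have hkm1 : m + 2 - 1 = m + 1 := rfl
  have hkp1 : m + 2 + 1 = m + 3 := rfl
  rw [hkm1, hkp1]
  by_contra hcon
  push_neg at hcon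
  obtain ⟨h1, h2⟩ := hcon
  have hq0 : 0 < 1 - μ * p := by nlinarith
  have hq1 : 1 - μ * p < 1 := by nlinarith [mul_pos hμ0 hp0]
  simp only [EI, Lprob, Rprob, show m+1-1 = m from rfl, show m+2-1 = m+1 from rfl,
    show m+3-1 = m+2 from rfl, pow_zero, pow_succ] at h1 h2
  push_cast at h1 h2
  set q := 1 - μ * p with hqdef
  set t := q ^ m with htdef
  have ht0 : 0 < t := pow_pos hq0 m
  rw [div_le_div_iff₀ (by positivity) (by positivity)] at h1
  rw [div_le_div_iff₀ (by positivity) (by positivity)] at h2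
  have hE : 0 < 1 - μ := by linarith
  have hA : (1-μ)^2*p*(((m:ℝ)+1)*((m:ℝ)+2))*t*(1-q)
      ≤ (1-μ)*(1 - ((m:ℝ)+2)*(t*q) + ((m:ℝ)+1)*(t*q*q)) := by nlinarith [h1]
  have hB : (1-μ)*(1 - ((m:ℝ)+3)*(t*q*q) + ((m:ℝ)+2)*(t*q*q*q))
      ≤ (1-μ)^2*p*(((m:ℝ)+2)*((m:ℝ)+3))*(t*q)*(1-q) := by nlinarith [h2]
  have hstep1 := mul_le_mul_of_nonneg_right hB (by positivity : (0:ℝ) ≤ (m:ℝ)+1)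
  have hstep2 := mul_le_mul_of_nonneg_right hA (by positivity : (0:ℝ) ≤ q*((m:ℝ)+3))
  have hkey := key_pos q hq0 hq1 m
  rw [show q^(m+2) = t*q*q by rw [htdef]; ring,
      show q^(m+3) = t*q*q*q by rw [htdef]; ring] at hkey
  nlinarith [hstep1, hstep2, hkey, hE, mul_pos hE hkey]
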